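/- Let G = (V, E) be a finite undirected graph with at least one edge and let e_0 ∈ E. Construct the game arena with V_Eve = V and V_Adam = E, with an edge from every v ∈ V to every e ∈ E, and an edge from each e = {u, w} ∈ E to u and to w; let the start vertex be e_0 and let the targets be the singletons {v} for v ∈ V. Then, for every k, Eve has a strategy such that every consistent play from e_0 visits at least k distinct vertices of V if and only if every vertex cover of G has size at least k. In particular, the maximum number of distinct vertices of V that Eve can guarantee to visit equals the minimum size of a vertex cover of G. -/

import Mathlib

/-- A game arena: a finite directed graph in which every vertex has at least one
outgoing edge, together with the set of vertices controlled by Eve (the remaining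
vertices are controlled by Adam). -/
structure Arena (V : Type*) [Fintype V] where
  E : V → V → Prop
  VEve : Set V
  succ_nonempty : ∀ v, ∃ w, E v w

variable {V : Type*} [Fintype V]

/-- An infinite play starting from `s`. -/
def IsPlay (A : Arena V) (s : V) (p : ℕ → V) : Prop :=
  p 0 = s ∧ ∀ i, A.E (p i) (p (i + 1))

/-- The play `p` visits the set `S`. -/
def Visits (p : ℕ → V) (S : Set V) : Prop := ∃ i, p i ∈ S

/-- A strategy maps a history (the sequence of previously visited vertices)
together with the current vertex to a next vertex. -/
def Strategy (V : Type*) : Type _ := List V → V → V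

/-- A strategy is valid if it always moves along an edge. -/
def ValidStrategy (A : Arena V) (σ : Strategy V) : Prop :=
  ∀ h v, A.E v (σ h v)

/-- The history `v_0 ... v_{i-1}` of the play `p` before time `i`. -/
def hist (p : ℕ → V) (i : ℕ) : List V := List.ofFn fun j : Fin i => p j

/-- The play `p` is consistent with the Eve-strategy `σ`. -/
def ConsistentEve (A : Arena V) (σ : Strategy V) (p : ℕ → V) : Prop :=
  ∀ i, p i ∈ A.VEve → p (i + 1) = σ (hist p i) (p i)

/-- The play `p` is consistent with the Adam-strategy `σ`. -/
def ConsistentAdam (A : Arena V) (σ : Strategy V) (p : ℕ → V) : Prop :=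
  ∀ i, p i ∉ A.VEve → p (i + 1) = σ (hist p i) (p i)

/-- The `i`-step Eve-attractor of the set `S`. -/
def AttrN (A : Arena V) (S : Set V) : ℕ → Set V
  | 0 => S
  | i + 1 => AttrN A S i ∪ {u | u ∈ A.VEve ∧ ∃ v, A.E u v ∧ v ∈ AttrN A S i}
      ∪ {u | u ∉ A.VEve ∧ ∀ v, A.E u v → v ∈ AttrN A S i}

/-- The Eve-attractor of the set `S`. -/
def Attr (A : Arena V) (S : Set V) : Set V := ⋃ i, AttrN A S i

/-- Eve wins the generalised reachability game with target sets `F i`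
from `s` if she has a strategy such that every consistent play from `s`
visits every target set. -/
def EveWins {ι : Type*} (A : Arena V) (s : V) (F : ι → Set V) : Prop :=
  ∃ σ : Strategy V, ValidStrategy A σ ∧
    ∀ p, IsPlay A s p → ConsistentEve A σ p → ∀ i, Visits p (F i)

/-- The vertex-cover game arena for an undirected graph `G`: Eve controls the
vertices of `G`, Adam controls the edges of `G`; from every vertex Eve can move
to every edge, and from an edge Adam can move to either of its endpoints. -/
noncomputable def vcArena {W : Type*} [Fintype W] (G : SimpleGraph W)
    [Fintype G.edgeSet] (e0 : G.edgeSet) : Arena (W ⊕ G.edgeSet) where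
  E p q :=
    match p, q with
    | .inl _, .inr _ => True
    | .inr e, .inl u => u ∈ (e : Sym2 W)
    | _, _ => False
  VEve := Set.range Sum.inl
  succ_nonempty p := by
    match p with
    | .inl v => exact ⟨Sum.inr e0, trivial⟩
    | .inr e => exact ⟨Sum.inl (e : Sym2 W).out.1, Sym2.out_fst_mem _⟩


/-!
Adam answers each edge with an endpoint in a fixed vertex cover `S`, so against any Eve strategy
the play only ever visits vertices of `S`. Conversely, Eve moves to an edge none of whose
endpoints has been visited yet, as long as there is one. If the set of vertices visited by such a
play were not a vertex cover, some edge would avoid it forever; then every round of the play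
would visit a new vertex, which the finiteness of `G` forbids. So the visited set is a vertex
cover, and Eve visits at least as many vertices as a smallest vertex cover has.
-/

theorem hist_succ {α : Type*} (p : ℕ → α) (n : ℕ) : hist p (n + 1) = hist p n ++ [p n] := by
  rw [hist, List.ofFn_succ', List.concat_eq_append]
  rfl

theorem mem_hist {α : Type*} {p : ℕ → α} {n : ℕ} {a : α} :
    a ∈ hist p n ↔ ∃ j < n, p j = a := by
  simp only [hist, List.mem_ofFn]
  exact ⟨fun ⟨j, hj⟩ => ⟨j, j.isLt, hj⟩, fun ⟨j, hj, hja⟩ => ⟨⟨j, hj⟩, hja⟩⟩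

namespace Arena

variable (A : Arena V) (s : V) (σ τ : Strategy V)

open Classical in
/-- The history and the current position after `n` moves of the play in which Eve follows `σ`
and Adam follows `τ`. -/
noncomputable def outcomeAux : ℕ → List V × V
  | 0 => ([], s)
  | n + 1 =>
    let (h, v) := outcomeAux n
    (h ++ [v], if v ∈ A.VEve then σ h v else τ h v)

noncomputable def outcome (n : ℕ) : V := (A.outcomeAux s σ τ n).2

theorem outcomeAux_fst (n : ℕ) : (A.outcomeAux s σ τ n).1 = hist (A.outcome s σ τ) n := by
  induction n with
  | zero => rfl
  | succ n ih => rw [hist_succ, ← ih]; rfl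

open Classical in
theorem outcome_succ (n : ℕ) :
    A.outcome s σ τ (n + 1) =
      if A.outcome s σ τ n ∈ A.VEve then σ (hist (A.outcome s σ τ) n) (A.outcome s σ τ n)
      else τ (hist (A.outcome s σ τ) n) (A.outcome s σ τ n) := by
  rw [← outcomeAux_fst]; rfl

variable {A σ τ}

theorem isPlay_outcome (hσ : ValidStrategy A σ) (hτ : ValidStrategy A τ) :
    IsPlay A s (A.outcome s σ τ) := by
  refine ⟨rfl, fun n => ?_⟩
  rw [outcome_succ]
  split
  exacts [hσ _ _, hτ _ _]

theorem consistentEve_outcome : ConsistentEve A σ (A.outcome s σ τ) := fun n hn => by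
  rw [outcome_succ, if_pos hn]

theorem consistentAdam_outcome : ConsistentAdam A τ (A.outcome s σ τ) := fun n hn => by
  rw [outcome_succ, if_neg hn]

end Arena

namespace SimpleGraph.IsVertexCover

variable {W : Type*} {G : SimpleGraph W} {S : Set W}

theorem exists_mem_of_mem_edgeSet (hS : G.IsVertexCover S) {e : Sym2 W} (he : e ∈ G.edgeSet) :
    ∃ u ∈ e, u ∈ S := by
  induction e using Sym2.ind with
  | _ u w =>
    rcases hS he with h | h
    exacts [⟨u, Sym2.mem_mk_left u w, h⟩, ⟨w, Sym2.mem_mk_right u w, h⟩]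

end SimpleGraph.IsVertexCover

section VertexCoverGame

variable {W : Type*} [Fintype W] {G : SimpleGraph W} [Fintype G.edgeSet] {e0 : G.edgeSet}

theorem vcArena_E_inl {v : W} {q : W ⊕ G.edgeSet} (h : (vcArena G e0).E (.inl v) q) :
    ∃ e, q = .inr e := by
  cases q with
  | inl _ => exact h.elim
  | inr e => exact ⟨e, rfl⟩

theorem vcArena_E_inr {e : G.edgeSet} {q : W ⊕ G.edgeSet} (h : (vcArena G e0).E (.inr e) q) :
    ∃ u ∈ (e : Sym2 W), q = .inl u := by
  cases q with
  | inl u => exact ⟨u, h, rfl⟩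
  | inr _ => exact h.elim

theorem inl_mem_vcArena_VEve (v : W) : .inl v ∈ (vcArena G e0).VEve := ⟨v, rfl⟩

theorem inr_not_mem_vcArena_VEve (e : G.edgeSet) : .inr e ∉ (vcArena G e0).VEve := by
  rintro ⟨v, hv⟩
  exact Sum.inl_ne_inr hv

theorem IsPlay.vcArena_odd_eq_inl {p : ℕ → W ⊕ G.edgeSet}
    (hp : IsPlay (vcArena G e0) (.inr e0) p) (i : ℕ) : ∃ v, p (2 * i + 1) = .inl v := by
  have even : ∀ i, ∃ e, p (2 * i) = .inr e := by
    intro i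
    induction i with
    | zero => exact ⟨e0, hp.1⟩
    | succ i ih =>
      obtain ⟨e, he⟩ := ih
      obtain ⟨v, -, hv⟩ := vcArena_E_inr (he ▸ hp.2 (2 * i))
      exact vcArena_E_inl (hv ▸ hp.2 (2 * i + 1))
  obtain ⟨e, he⟩ := even i
  obtain ⟨v, -, hv⟩ := vcArena_E_inr (he ▸ hp.2 (2 * i))
  exact ⟨v, hv⟩

-- `ValidStrategy` constrains a strategy at every position, so Adam's strategies also move at
-- Eve's positions and vice versa.
noncomputable def coverStrategy {S : Set W} (hS : G.IsVertexCover S) (e0 : G.edgeSet) :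
    Strategy (W ⊕ G.edgeSet) := fun _ v =>
  match v with
  | .inl _ => .inr e0
  | .inr e => .inl (hS.exists_mem_of_mem_edgeSet e.2).choose

theorem coverStrategy_valid {S : Set W} (hS : G.IsVertexCover S) :
    ValidStrategy (vcArena G e0) (coverStrategy hS e0) := fun _ v =>
  match v with
  | .inl _ => trivial
  | .inr e => (hS.exists_mem_of_mem_edgeSet e.2).choose_spec.1

theorem visited_subset_of_consistentAdam {S : Set W} (hS : G.IsVertexCover S)
    {p : ℕ → W ⊕ G.edgeSet} (hp : IsPlay (vcArena G e0) (.inr e0) p)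
    (hAdam : ConsistentAdam (vcArena G e0) (coverStrategy hS e0) p) :
    {v : W | ∃ i, p i = .inl v} ⊆ S := by
  rintro v ⟨_ | i, hi⟩
  · exact Sum.inr_ne_inl (hp.1.symm.trans hi) |>.elim
  cases hpi : p i with
  | inl w =>
    obtain ⟨e, he⟩ := vcArena_E_inl (hpi ▸ hp.2 i)
    exact Sum.inl_ne_inr (hi ▸ he) |>.elim
  | inr e =>
    have hnext := hAdam i (hpi ▸ inr_not_mem_vcArena_VEve e)
    rw [hi, hpi] at hnext
    exact Sum.inl_injective hnext ▸ (hS.exists_mem_of_mem_edgeSet e.2).choose_spec.2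

theorem card_le_of_isVertexCover {k : ℕ} {σ : Strategy (W ⊕ G.edgeSet)}
    (hσ : ValidStrategy (vcArena G e0) σ)
    (hwin : ∀ p, IsPlay (vcArena G e0) (.inr e0) p → ConsistentEve (vcArena G e0) σ p →
      k ≤ {v : W | ∃ i, p i = .inl v}.ncard)
    {S : Finset W} (hS : G.IsVertexCover S) : k ≤ S.card := by
  have hτ := coverStrategy_valid (e0 := e0) hS
  calc k ≤ _ := hwin _ (Arena.isPlay_outcome _ hσ hτ) (Arena.consistentEve_outcome _)
    _ ≤ (S : Set W).ncard := Set.ncard_le_ncard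
        (visited_subset_of_consistentAdam hS (Arena.isPlay_outcome _ hσ hτ)
          (Arena.consistentAdam_outcome _)) S.finite_toSet
    _ = S.card := Set.ncard_coe_finset S

open Classical in
noncomputable def freshEdgeStrategy (G : SimpleGraph W) [Fintype G.edgeSet] (e0 : G.edgeSet) :
    Strategy (W ⊕ G.edgeSet) := fun h v =>
  match v with
  | .inr e => .inl (e : Sym2 W).out.1
  | .inl w =>
    if he : ∃ e : G.edgeSet, ∀ u ∈ (e : Sym2 W), .inl u ∉ .inl w :: h then .inr he.choose
    else .inr e0

theorem freshEdgeStrategy_valid : ValidStrategy (vcArena G e0) (freshEdgeStrategy G e0) :=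
  fun h v => by
    cases v with
    | inr e => exact Sym2.out_fst_mem _
    | inl w =>
      simp only [freshEdgeStrategy]
      split <;> trivial

theorem fresh_of_consistentEve_freshEdgeStrategy {p : ℕ → W ⊕ G.edgeSet}
    (hp : IsPlay (vcArena G e0) (.inr e0) p)
    (hEve : ConsistentEve (vcArena G e0) (freshEdgeStrategy G e0) p)
    {n : ℕ} {v : W} (hn : p n = .inl v)
    {e : G.edgeSet} (he : ∀ u ∈ (e : Sym2 W), ∀ j ≤ n, p j ≠ .inl u) :
    ∀ j < n + 2, p j ≠ p (n + 2) := by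
  have hmem : ∀ j ≤ n, p j ∈ .inl v :: hist p n := fun j hj => by
    rw [← hn]
    rcases hj.lt_or_eq with hj | rfl
    exacts [List.mem_cons_of_mem _ (mem_hist.2 ⟨j, hj, rfl⟩), List.mem_cons_self]
  have hex : ∃ e : G.edgeSet, ∀ u ∈ (e : Sym2 W), .inl u ∉ .inl v :: hist p n := by
    refine ⟨e, fun u hu hmemu => ?_⟩
    rw [← hn, List.mem_cons, mem_hist] at hmemu
    rcases hmemu with h | ⟨j, hj, h⟩
    exacts [he u hu n le_rfl h.symm, he u hu j hj.le h]
  have hnext : p (n + 1) = .inr hex.choose := by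
    rw [hEve n (hn ▸ inl_mem_vcArena_VEve v), hn]
    exact dif_pos hex
  obtain ⟨u, hu, hpu⟩ := vcArena_E_inr (hnext ▸ hp.2 (n + 1))
  intro j hj hpj
  rcases Nat.lt_succ_iff_lt_or_eq.1 hj with hj | rfl
  · exact hex.choose_spec u hu (hpu ▸ hpj ▸ hmem j (Nat.lt_succ_iff.1 hj))
  · exact Sum.inl_ne_inr (hpu ▸ hnext ▸ hpj).symm

theorem isVertexCover_visited_of_consistentEve {p : ℕ → W ⊕ G.edgeSet}
    (hp : IsPlay (vcArena G e0) (.inr e0) p)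
    (hEve : ConsistentEve (vcArena G e0) (freshEdgeStrategy G e0) p) :
    G.IsVertexCover {v | ∃ i, p i = .inl v} := by
  by_contra hcover
  obtain ⟨a, b, hab, ha, hb⟩ :
      ∃ a b, G.Adj a b ∧ (∀ i, p i ≠ .inl a) ∧ ∀ i, p i ≠ .inl b := by
    simpa [SimpleGraph.IsVertexCover] using hcover
  have hfresh (i : ℕ) : ∀ j < 2 * i + 3, p j ≠ p (2 * i + 3) := by
    obtain ⟨v, hv⟩ := hp.vcArena_odd_eq_inl i
    refine fresh_of_consistentEve_freshEdgeStrategy hp hEve hv (e := ⟨s(a, b), hab⟩) ?_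
    rintro u hu j - hj
    rcases Sym2.mem_iff.1 hu with rfl | rfl
    exacts [ha j hj, hb j hj]
  exact not_injective_infinite_finite (fun i => p (2 * i + 3)) <|
    Function.Injective.of_lt_imp_ne fun i j hij => hfresh j _ (by omega)

theorem exists_strategy_visits_iff (k : ℕ) :
    (∃ σ : Strategy (W ⊕ G.edgeSet), ValidStrategy (vcArena G e0) σ ∧
      ∀ p, IsPlay (vcArena G e0) (.inr e0) p → ConsistentEve (vcArena G e0) σ p →
        k ≤ {v : W | ∃ i, p i = .inl v}.ncard) ↔
      ∀ S : Finset W, G.IsVertexCover S → k ≤ S.card := by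
  refine ⟨fun ⟨σ, hσ, hwin⟩ S hS => card_le_of_isVertexCover hσ hwin hS,
    fun hk => ⟨freshEdgeStrategy G e0, freshEdgeStrategy_valid, fun p hp hEve => ?_⟩⟩
  have hfin := Set.toFinite {v : W | ∃ i, p i = .inl v}
  rw [Set.ncard_eq_toFinset_card _ hfin]
  exact hk _ (by simpa using isVertexCover_visited_of_consistentEve hp hEve)

end VertexCoverGame

theorem vc_game_value_general (W : Type*) [Fintype W] (G : SimpleGraph W)
    [Fintype G.edgeSet] (e0 : G.edgeSet) :
    (∀ k : ℕ,
      (∃ σ : Strategy (W ⊕ G.edgeSet), ValidStrategy (vcArena G e0) σ ∧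
        ∀ p, IsPlay (vcArena G e0) (Sum.inr e0) p →
          ConsistentEve (vcArena G e0) σ p →
          k ≤ {v : W | ∃ i, p i = Sum.inl v}.ncard) ↔
      (∀ S : Finset W, (∀ u w, G.Adj u w → u ∈ S ∨ w ∈ S) → k ≤ S.card)) ∧
    sSup {k : ℕ | ∃ σ : Strategy (W ⊕ G.edgeSet),
        ValidStrategy (vcArena G e0) σ ∧
        ∀ p, IsPlay (vcArena G e0) (Sum.inr e0) p →
          ConsistentEve (vcArena G e0) σ p →
          k ≤ {v : W | ∃ i, p i = Sum.inl v}.ncard} =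
      sInf {c : ℕ | ∃ S : Finset W,
        (∀ u w, G.Adj u w → u ∈ S ∨ w ∈ S) ∧ c = S.card} := by
  have value := exists_strategy_visits_iff (G := G) (e0 := e0)
  refine ⟨value, ?_⟩
  have hcovers : {c : ℕ | ∃ S : Finset W,
      (∀ u w, G.Adj u w → u ∈ S ∨ w ∈ S) ∧ c = S.card}.Nonempty :=
    ⟨_, Finset.univ, fun u _ _ => Or.inl (Finset.mem_univ u), rfl⟩
  rw [← csSup_lowerBounds_eq_csInf (OrderBot.bddBelow _) hcovers]
  congr 1
  ext k
  exact (value k).trans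
    ⟨fun hk _ ⟨S, hS, hc⟩ => hc ▸ hk S hS, fun hk S hS => hk ⟨S, hS, rfl⟩⟩

/-- in the vertex-cover game with start edge `e0` and singleton
targets `{v}` for every vertex `v` of `G`, Eve can guarantee that at least `k`
distinct vertices of `G` are visited iff every vertex cover of `G` has size at
least `k`; in particular the maximum number of distinct vertices Eve can
guarantee to visit is the minimum size of a vertex cover. -/
theorem vc_game_value (W : Type*) [Fintype W] (G : SimpleGraph W)
    [Fintype G.edgeSet] (hG : Nonempty G.edgeSet) (e0 : G.edgeSet) :
    (∀ k : ℕ,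
      (∃ σ : Strategy (W ⊕ G.edgeSet), ValidStrategy (vcArena G e0) σ ∧
        ∀ p, IsPlay (vcArena G e0) (Sum.inr e0) p →
          ConsistentEve (vcArena G e0) σ p →
          k ≤ {v : W | ∃ i, p i = Sum.inl v}.ncard) ↔
      (∀ S : Finset W, (∀ u w, G.Adj u w → u ∈ S ∨ w ∈ S) → k ≤ S.card)) ∧
    sSup {k : ℕ | ∃ σ : Strategy (W ⊕ G.edgeSet),
        ValidStrategy (vcArena G e0) σ ∧
        ∀ p, IsPlay (vcArena G e0) (Sum.inr e0) p →
          ConsistentEve (vcArena G e0) σ p →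
          k ≤ {v : W | ∃ i, p i = Sum.inl v}.ncard} =
      sInf {c : ℕ | ∃ S : Finset W,
        (∀ u w, G.Adj u w → u ∈ S ∨ w ∈ S) ∧ c = S.card} :=
  vc_game_value_general W G e0
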